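/- Consider a one-layer transformer τ with h heads: τ(X)_{:,l} = MLP(Att(X_{:,l}, X) + X_{:,l}) for X ∈ ℝ^{d×m}, where Att is h-head self-attention with head matrices W_q^i, W_k^i ∈ ℝ^{s×d}, W_v^i ∈ ℝ^{s'×d}, W_o^i ∈ ℝ^{d×s'}, and MLP(x) = W_2 ReLU(W_1 x + b_1) + b_2 + x. For a compactly supported probability measure μ on ℝ^d define Γ_μ(x) = Σ_{i=1}^h ( ∫ W_o^i W_v^i y · exp((W_k^i y)^T W_q^i x) dμ(y) ) / ( ∫ exp((W_k^i y)^T W_q^i x) dμ(y) ) and Δ_μ(x) = MLP(Γ_μ(x) + x). For X ∈ ℝ^{d×m}, let M(X) = (1/m) Σ_{j=1}^m δ_{X_{:,j}}. Then the pushforward measure (Δ_{M(X)})_♯ M(X) equals (1/m) Σ_{l=1}^m δ_{τ(X)_{:,l}}; that is, the mean-field transformer layer T(μ) = (Δ_μ)_♯ μ satisfies T(M(X)) = M(τ(X)). -/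

import Mathlib

open MeasureTheory

/-- Softmax of a real vector. -/
noncomputable def softmax {n : ℕ} (z : Fin n → ℝ) : Fin n → ℝ :=
  fun j => Real.exp (z j) / ∑ l, Real.exp (z l)

/-- The attention of a query `x` within a context `X` for a single head
with matrices `WQ, WK, WV, WO`. -/
noncomputable def headAtt {s s' d m : ℕ}
    (WQ WK : Matrix (Fin s) (Fin d) ℝ) (WV : Matrix (Fin s') (Fin d) ℝ)
    (WO : Matrix (Fin d) (Fin s') ℝ)
    (x : Fin d → ℝ) (X : Matrix (Fin d) (Fin m) ℝ) : Fin d → ℝ :=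
  ∑ j, softmax (fun j' => dotProduct (WK.mulVec fun i => X i j') (WQ.mulVec x)) j •
    WO.mulVec (WV.mulVec fun i => X i j)

/-- The empirical measure `M(X) = (1/m) ∑ⱼ δ_{X_{:,j}}` of the columns of `X`. -/
noncomputable def empMeasure {d m : ℕ} (X : Matrix (Fin d) (Fin m) ℝ) :
    Measure (Fin d → ℝ) :=
  (m : ENNReal)⁻¹ • ∑ j : Fin m, Measure.dirac (fun i => X i j)

/-- Mean-field `h`-head self-attention map `Γ_μ`. -/
noncomputable def Gamma {h s s' d : ℕ}
    (WQ WK : Fin h → Matrix (Fin s) (Fin d) ℝ)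
    (WV : Fin h → Matrix (Fin s') (Fin d) ℝ)
    (WO : Fin h → Matrix (Fin d) (Fin s') ℝ)
    (μ : Measure (Fin d → ℝ)) (x : Fin d → ℝ) : Fin d → ℝ :=
  ∑ i, (∫ y, Real.exp (dotProduct ((WK i).mulVec y) ((WQ i).mulVec x)) ∂μ)⁻¹ •
      ∫ y, Real.exp (dotProduct ((WK i).mulVec y) ((WQ i).mulVec x)) •
        (WO i).mulVec ((WV i).mulVec y) ∂μ

/-- The MLP layer `x ↦ W₂ ReLU(W₁ x + b₁) + b₂ + x` (with residual connection). -/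
noncomputable def mlp {d dff : ℕ} (W1 : Matrix (Fin dff) (Fin d) ℝ)
    (W2 : Matrix (Fin d) (Fin dff) ℝ) (b1 : Fin dff → ℝ) (b2 : Fin d → ℝ)
    (x : Fin d → ℝ) : Fin d → ℝ :=
  W2.mulVec (fun i => max (W1.mulVec x i + b1 i) 0) + b2 + x

/-- One-layer `h`-head transformer: `τ(X)_{:,l} = MLP(Att(X_{:,l}, X) + X_{:,l})`. -/
noncomputable def tf {h s s' d dff n : ℕ}
    (WQ WK : Fin h → Matrix (Fin s) (Fin d) ℝ)
    (WV : Fin h → Matrix (Fin s') (Fin d) ℝ)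
    (WO : Fin h → Matrix (Fin d) (Fin s') ℝ)
    (W1 : Matrix (Fin dff) (Fin d) ℝ) (W2 : Matrix (Fin d) (Fin dff) ℝ)
    (b1 : Fin dff → ℝ) (b2 : Fin d → ℝ)
    (X : Matrix (Fin d) (Fin n) ℝ) : Matrix (Fin d) (Fin n) ℝ :=
  Matrix.of fun i l => mlp W1 W2 b1 b2
    ((∑ k, headAtt (WQ k) (WK k) (WV k) (WO k) (fun r => X r l) X) + fun r => X r l) i

/-- The mean-field transformer layer map `Δ_μ(x) = MLP(Γ_μ(x) + x)`. -/
noncomputable def Delta {h s s' d dff : ℕ}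
    (WQ WK : Fin h → Matrix (Fin s) (Fin d) ℝ)
    (WV : Fin h → Matrix (Fin s') (Fin d) ℝ)
    (WO : Fin h → Matrix (Fin d) (Fin s') ℝ)
    (W1 : Matrix (Fin dff) (Fin d) ℝ) (W2 : Matrix (Fin d) (Fin dff) ℝ)
    (b1 : Fin dff → ℝ) (b2 : Fin d → ℝ)
    (μ : Measure (Fin d → ℝ)) (x : Fin d → ℝ) : Fin d → ℝ :=
  mlp W1 W2 b1 b2 (Gamma WQ WK WV WO μ x + x)

lemma integral_empMeasure {d m : ℕ} {E : Type*} [NormedAddCommGroup E] [NormedSpace ℝ E] [CompleteSpace E]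
    (X : Matrix (Fin d) (Fin m) ℝ) (f : (Fin d → ℝ) → E) :
    ∫ y, f y ∂(empMeasure X) = (m : ℝ)⁻¹ • ∑ j : Fin m, f (fun i => X i j) := by
  unfold empMeasure
  rw [integral_smul_measure,
    integral_finset_sum_measure (fun j _ => (integrable_const (f (fun i => X i j))).congr (ae_eq_dirac f).symm)]
  simp only [MeasureTheory.integral_dirac]
  simp [ENNReal.toReal_inv]


lemma Gamma_empMeasure {h s s' d m : ℕ} (hm : 0 < m)
    (WQ WK : Fin h → Matrix (Fin s) (Fin d) ℝ)
    (WV : Fin h → Matrix (Fin s') (Fin d) ℝ)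
    (WO : Fin h → Matrix (Fin d) (Fin s') ℝ)
    (X : Matrix (Fin d) (Fin m) ℝ) (x : Fin d → ℝ) :
    Gamma WQ WK WV WO (empMeasure X) x
      = ∑ i, headAtt (WQ i) (WK i) (WV i) (WO i) x X := by
  have hm' : (m : ℝ) ≠ 0 := Nat.cast_ne_zero.mpr hm.ne'
  unfold Gamma headAtt softmax
  refine Finset.sum_congr rfl fun i _ => ?_
  rw [integral_empMeasure, integral_empMeasure]
  set e : Fin m → ℝ := fun j =>
    Real.exp (dotProduct ((WK i).mulVec fun r => X r j) ((WQ i).mulVec x)) with he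
  set v : Fin m → (Fin d → ℝ) := fun j => (WO i).mulVec ((WV i).mulVec fun r => X r j) with hv
  have hS : (∑ j, e j) ≠ 0 := by
    have : Nonempty (Fin m) := Fin.pos_iff_nonempty.mp hm
    exact (Finset.sum_pos (fun j _ => Real.exp_pos _) Finset.univ_nonempty).ne'
  have : ((m : ℝ)⁻¹ • ∑ j, e j)⁻¹ • (m : ℝ)⁻¹ • ∑ j, e j • v j
      = (∑ j, e j)⁻¹ • ∑ j, e j • v j := by
    rw [smul_eq_mul, mul_inv, smul_smul]
    congr 1
    field_simp
  rw [this, Finset.smul_sum]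
  refine Finset.sum_congr rfl fun j _ => ?_
  rw [smul_smul, div_eq_inv_mul]

lemma map_finset_sum_measure {α β : Type*} [MeasurableSpace α] [MeasurableSpace β]
    {f : α → β} (hf : Measurable f) {ι : Type*} (s : Finset ι) (μ : ι → Measure α) :
    (∑ j ∈ s, μ j).map f = ∑ j ∈ s, (μ j).map f := by
  classical
  induction s using Finset.induction_on with
  | empty => simp
  | insert _ _ hx ih =>
      rw [Finset.sum_insert hx, Finset.sum_insert hx, Measure.map_add _ _ hf, ih]

lemma measurable_mulVec {a b : ℕ} (M : Matrix (Fin a) (Fin b) ℝ) :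
    Measurable (M.mulVec) := by
  have : Continuous M.mulVecLin := M.mulVecLin.continuous_of_finiteDimensional
  exact this.measurable

lemma measurable_mlp {d dff : ℕ} (W1 : Matrix (Fin dff) (Fin d) ℝ)
    (W2 : Matrix (Fin d) (Fin dff) ℝ) (b1 : Fin dff → ℝ) (b2 : Fin d → ℝ) :
    Measurable (mlp W1 W2 b1 b2) := by
  unfold mlp
  have h1 : Measurable fun y : Fin d → ℝ => fun i => max (W1.mulVec y i + b1 i) 0 :=
    measurable_pi_lambda _ fun i =>
      (((measurable_pi_apply i).comp (measurable_mulVec W1)).add measurable_const).max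
        measurable_const
  exact (((measurable_mulVec W2).comp h1).add measurable_const).add measurable_id

lemma measurable_headAtt {s s' d m : ℕ}
    (WQ WK : Matrix (Fin s) (Fin d) ℝ) (WV : Matrix (Fin s') (Fin d) ℝ)
    (WO : Matrix (Fin d) (Fin s') ℝ) (X : Matrix (Fin d) (Fin m) ℝ) :
    Measurable (fun x => headAtt WQ WK WV WO x X) := by
  unfold headAtt softmax
  refine Finset.measurable_sum _ fun j _ => ?_
  have hz : ∀ j' : Fin m, Measurable fun x : Fin d → ℝ =>
      dotProduct (WK.mulVec fun i => X i j') (WQ.mulVec x) := by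
    intro j'
    unfold dotProduct
    exact Finset.measurable_sum _ fun i _ =>
      measurable_const.mul ((measurable_pi_apply i).comp (measurable_mulVec WQ))
  have hc : Measurable fun x : Fin d → ℝ =>
      Real.exp (dotProduct (WK.mulVec fun i => X i j) (WQ.mulVec x)) /
        ∑ l, Real.exp (dotProduct (WK.mulVec fun i => X i l) (WQ.mulVec x)) :=
    (Real.measurable_exp.comp (hz j)).div
      (Finset.measurable_sum _ fun l _ => Real.measurable_exp.comp (hz l))
  exact measurable_pi_lambda _ fun i => hc.mul measurable_const

/-- The mean-field transformer layer generalizes the discrete transformer layer: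
`T(M(X)) = M(τ(X))`, i.e. the pushforward of the empirical measure of the columns of
`X` by `Δ_{M(X)}` is the empirical measure of the columns of `τ(X)`. -/
theorem meanfield_layer_generalizes_discrete
    {h s s' d dff m : ℕ} (hh : 0 < h) (hm : 0 < m)
    (WQ WK : Fin h → Matrix (Fin s) (Fin d) ℝ)
    (WV : Fin h → Matrix (Fin s') (Fin d) ℝ)
    (WO : Fin h → Matrix (Fin d) (Fin s') ℝ)
    (W1 : Matrix (Fin dff) (Fin d) ℝ) (W2 : Matrix (Fin d) (Fin dff) ℝ)
    (b1 : Fin dff → ℝ) (b2 : Fin d → ℝ)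
    (X : Matrix (Fin d) (Fin m) ℝ) :
    (empMeasure X).map (Delta WQ WK WV WO W1 W2 b1 b2 (empMeasure X))
      = empMeasure (tf WQ WK WV WO W1 W2 b1 b2 X) := by
  set g : (Fin d → ℝ) → (Fin d → ℝ) := fun x =>
    mlp W1 W2 b1 b2 ((∑ k, headAtt (WQ k) (WK k) (WV k) (WO k) x X) + x) with hgdef
  have hDelta : Delta WQ WK WV WO W1 W2 b1 b2 (empMeasure X) = g := by
    funext x
    unfold Delta
    rw [Gamma_empMeasure hm]
  have hg : Measurable g :=
    (measurable_mlp W1 W2 b1 b2).comp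
      ((Finset.measurable_sum _ fun k _ =>
        measurable_headAtt (WQ k) (WK k) (WV k) (WO k) X).add measurable_id)
  rw [hDelta]
  conv_lhs => rw [empMeasure]
  rw [Measure.map_smul, map_finset_sum_measure hg]
  simp only [Measure.map_dirac' hg]
  rw [empMeasure]
  congr 1
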